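/- Let (a_n) be an arithmetic sequence and (e_n) an arithmetic-type sequence associated with (a_n). If there exists x ∈ t_{(e_n)}(𝕋) such that supp(x) is infinite, then t_{(e_n)}(𝕋) has cardinality 𝔠, the cardinality of the continuum. -/

import Mathlib

open Filter Topology

noncomputable section

/-- The circle group `𝕋 = ℝ/ℤ`. -/
abbrev Circle1 : Type := AddCircle (1 : ℝ)

/-- An arithmetic sequence `(a_n)_{n ≥ 1}`, with the convention `a 0 = 1`:
a strictly increasing sequence of positive integers with `1 < a 1` and `a n ∣ a (n+1)`. -/
def IsArithSeq (a : ℕ → ℕ) : Prop :=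
  a 0 = 1 ∧ StrictMono a ∧ ∀ n, a n ∣ a (n + 1)

/-- The ratio sequence: `q n = a n / a (n-1)` (so `q 1 = a 1`). -/
def ratioSeq (a : ℕ → ℕ) (n : ℕ) : ℕ := a n / a (n - 1)

/-- The subgroup of `𝕋` characterized by a sequence of integers `(u n)`. -/
def charSub (u : ℕ → ℕ) : Set Circle1 :=
  {x : Circle1 | Tendsto (fun n => (u n) • x) atTop (nhds 0)}

/-- The set `{r·a_{k-1} : k ≥ 1, 1 ≤ r ≤ q_k - 1}` whose increasing enumeration is `(d_n)`. -/
def DSet (a : ℕ → ℕ) : Set ℕ :=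
  {m | ∃ k, 1 ≤ k ∧ ∃ r, 1 ≤ r ∧ r ≤ ratioSeq a k - 1 ∧ m = r * a (k - 1)}

/-- `(d_n)` is the strictly increasing enumeration of `DSet a`. -/
def IsDSeq (a d : ℕ → ℕ) : Prop := StrictMono d ∧ Set.range d = DSet a

/-- An arithmetic-type sequence associated with the arithmetic sequence `(a_n)`:
a strictly increasing sequence of positive integers whose set of values contains all the
values `a k` (for `k ≥ 1`) and is contained in `DSet a`. -/
def IsArithTypeSeq (a e : ℕ → ℕ) : Prop :=
  StrictMono e ∧ (∀ k, 1 ≤ k → a k ∈ Set.range e) ∧ Set.range e ⊆ DSet a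

/-- `(c_n)_{n ≥ 1}` is the canonical representation of `x ∈ 𝕋` w.r.t. the arithmetic
sequence `(a_n)`: `0 ≤ c n ≤ q n - 1` for all `n ≥ 1`, `c n < q n - 1` infinitely often,
and `x = Σ_{n ≥ 1} c n / a n` in `𝕋`. -/
def IsCanonicalRep (a c : ℕ → ℕ) (x : Circle1) : Prop :=
  (∀ n, 1 ≤ n → c n ≤ ratioSeq a n - 1) ∧
  {n | 1 ≤ n ∧ c n < ratioSeq a n - 1}.Infinite ∧
  x = ((∑' n : ℕ, (c (n + 1) : ℝ) / (a (n + 1) : ℝ) : ℝ) : Circle1)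

/-- The support of a digit sequence: `supp(x) = {n ≥ 1 : c n ≠ 0}`. -/
def suppOf (c : ℕ → ℕ) : Set ℕ := {n | 1 ≤ n ∧ c n ≠ 0}

/-!
Write `x = Σ cₙ / aₙ`. Multiplying by `a_N` kills the first `N` digits and leaves `a_N` times
the tail, which lies strictly between `0` and `1`; so no `a_N • x` vanishes, while
`a_N • x → 0` because every `a_N` is a term of `(e_n)`. Hence `w_N = x - round (a_N x) / a_N`
satisfies `0 < a_N |w_N| = ‖a_N • x‖ → 0`, and one can pick `N₀ < N₁ < ⋯` with
`a_{N_{j+1}} |w_{N_{j+1}}| ≤ |w_{N_j}| / 4`. For `S ⊆ ℕ` put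
`y_S = Σ_{j ∈ S} (w_{N_j} - w_{N_{j+1}})`. Each difference dominates all later ones, so
`S ↦ y_S` is injective into `𝕋`. Every `e_n` is divisible by each `a_i < e_n`, so if
`a_{N_J} < e_n ≤ a_{N_{J+1}}`, the blocks before `J` are killed by `e_n`, block `J` contributes
`‖e_n • x‖` up to `a_{N_{J+1}} |w_{N_{J+1}}|`, and the later blocks are summably small; thus
`e_n • y_S → 0`, and `t_{(e_n)}(𝕋)` contains `2 ^ ℵ₀` points.
-/

namespace IsArithSeq

variable {a : ℕ → ℕ}

lemma pos (ha : IsArithSeq a) (n : ℕ) : 0 < a n := by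
  simpa [ha.1, Nat.one_le_iff_ne_zero, Nat.pos_iff_ne_zero] using ha.2.1.monotone n.zero_le

lemma dvd_of_le (ha : IsArithSeq a) {m n : ℕ} (h : m ≤ n) : a m ∣ a n := by
  induction n, h using Nat.le_induction with
  | base => rfl
  | succ n _ ih => exact ih.trans (ha.2.2 n)

lemma ratioSeq_mul (ha : IsArithSeq a) (n : ℕ) : ratioSeq a (n + 1) * a n = a (n + 1) :=
  Nat.div_mul_cancel (ha.2.2 n)

lemma succ_mul_le (ha : IsArithSeq a) {n d : ℕ} (hd : d ≤ ratioSeq a (n + 1) - 1) :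
    (d + 1) * a n ≤ a (n + 1) := by
  have hq : ratioSeq a (n + 1) ≠ 0 := by
    rintro hq
    have := ha.ratioSeq_mul n
    rw [hq, zero_mul] at this
    exact (ha.pos (n + 1)).ne this
  rw [← ha.ratioSeq_mul n]
  exact Nat.mul_le_mul_right _ (by omega)

lemma succ_mul_lt (ha : IsArithSeq a) {n d : ℕ} (hd : d < ratioSeq a (n + 1) - 1) :
    (d + 1) * a n < a (n + 1) := by
  rw [← ha.ratioSeq_mul n]
  exact Nat.mul_lt_mul_of_pos_right (by omega) (ha.pos n)

lemma dvd_of_mem_DSet (ha : IsArithSeq a) {m i : ℕ} (hm : m ∈ DSet a) (hi : a i < m) :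
    a i ∣ m := by
  obtain ⟨k, hk, r, hr, hrq, rfl⟩ := hm
  obtain ⟨k, rfl⟩ : ∃ k', k = k' + 1 := ⟨k - 1, by omega⟩
  have hlt : r * a k < a (k + 1) := by
    have := ha.succ_mul_le hrq
    have := ha.pos k
    nlinarith
  have hik : i ≤ k := Nat.lt_succ_iff.mp (ha.2.1.lt_iff_lt.mp (hi.trans hlt))
  exact (ha.dvd_of_le hik).trans (dvd_mul_left _ _)

lemma tendsto_one_div (ha : IsArithSeq a) :
    Tendsto (fun n => (1 : ℝ) / a n) atTop (𝓝 0) :=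
  tendsto_one_div_atTop_nhds_zero_nat.comp ha.2.1.tendsto_atTop

end IsArithSeq

lemma one_div_sub_one_div_sub_div {A B d : ℝ} (hA : A ≠ 0) (hB : B ≠ 0) :
    1 / A - 1 / B - d / B = (B - (d + 1) * A) / (A * B) := by
  field_simp
  ring

lemma Antitone.hasSum_sub_succ {f : ℕ → ℝ} (hf : Antitone f) (hlim : Tendsto f atTop (𝓝 0)) :
    HasSum (fun n => f n - f (n + 1)) (f 0) := by
  rw [hasSum_iff_tendsto_nat_of_nonneg fun n => sub_nonneg.2 (hf n.le_succ)]
  simp_rw [Finset.sum_range_sub']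
  simpa using tendsto_const_nhds.sub hlim

def digitTerm (a c : ℕ → ℕ) (n : ℕ) : ℝ := c (n + 1) / a (n + 1)

section Digits

variable {a c : ℕ → ℕ}

lemma digitTerm_nonneg (n : ℕ) : 0 ≤ digitTerm a c n := by
  unfold digitTerm; positivity

lemma digitTerm_le (ha : IsArithSeq a) (hdig : ∀ n, 1 ≤ n → c n ≤ ratioSeq a n - 1) (n : ℕ) :
    digitTerm a c n ≤ 1 / a n - 1 / a (n + 1) := by
  have h : ((c (n + 1) + 1) * a n : ℝ) ≤ a (n + 1) := by
    exact_mod_cast ha.succ_mul_le (hdig (n + 1) n.succ_pos)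
  rw [← sub_nonneg, digitTerm, one_div_sub_one_div_sub_div (by exact_mod_cast (ha.pos n).ne')
    (by exact_mod_cast (ha.pos (n + 1)).ne')]
  exact div_nonneg (sub_nonneg.2 h) (by positivity)

lemma digitTerm_lt (ha : IsArithSeq a) {n : ℕ} (hn : c (n + 1) < ratioSeq a (n + 1) - 1) :
    digitTerm a c n < 1 / a n - 1 / a (n + 1) := by
  have h : ((c (n + 1) + 1) * a n : ℝ) < a (n + 1) := by exact_mod_cast ha.succ_mul_lt hn
  rw [← sub_pos, digitTerm, one_div_sub_one_div_sub_div (by exact_mod_cast (ha.pos n).ne')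
    (by exact_mod_cast (ha.pos (n + 1)).ne')]
  exact div_pos (sub_pos.2 h) (by have := ha.pos n; have := ha.pos (n + 1); positivity)

lemma hasSum_one_div_sub_one_div (ha : IsArithSeq a) (N : ℕ) :
    HasSum (fun k => (1 : ℝ) / a (k + N) - 1 / a (k + N + 1)) (1 / a N) := by
  have hanti : Antitone fun k => (1 : ℝ) / a (k + N) := fun i j hij => by
    have := ha.pos (i + N)
    have : a (i + N) ≤ a (j + N) := ha.2.1.monotone (by omega)
    dsimp only
    gcongr
  simpa [add_right_comm] using hanti.hasSum_sub_succ
    (ha.tendsto_one_div.comp (tendsto_add_atTop_nat N))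

lemma summable_digitTerm (ha : IsArithSeq a) (hdig : ∀ n, 1 ≤ n → c n ≤ ratioSeq a n - 1) :
    Summable (digitTerm a c) :=
  .of_nonneg_of_le digitTerm_nonneg (digitTerm_le ha hdig)
    (by simpa using (hasSum_one_div_sub_one_div ha 0).summable)

lemma tsum_digitTerm_tail_pos (ha : IsArithSeq a) (hdig : ∀ n, 1 ≤ n → c n ≤ ratioSeq a n - 1)
    (hs : (suppOf c).Infinite) (N : ℕ) : 0 < ∑' k, digitTerm a c (k + N) := by
  obtain ⟨n, ⟨hn, hcn⟩, hnN⟩ := hs.exists_gt N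
  refine ((summable_nat_add_iff N).2 (summable_digitTerm ha hdig)).tsum_pos
    (fun _ => digitTerm_nonneg _) (n - 1 - N) ?_
  rw [digitTerm, show n - 1 - N + N + 1 = n by omega]
  have := ha.pos n
  have : 0 < c n := Nat.pos_of_ne_zero hcn
  positivity

lemma tsum_digitTerm_tail_lt (ha : IsArithSeq a) (hdig : ∀ n, 1 ≤ n → c n ≤ ratioSeq a n - 1)
    (hio : {n | 1 ≤ n ∧ c n < ratioSeq a n - 1}.Infinite) (N : ℕ) :
    ∑' k, digitTerm a c (k + N) < 1 / a N := by
  obtain ⟨n, ⟨hn, hcn⟩, hnN⟩ := hio.exists_gt N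
  have hlt : digitTerm a c (n - 1 - N + N) < 1 / a (n - 1 - N + N) - 1 / a (n - 1 - N + N + 1) :=
    digitTerm_lt ha (by rwa [show n - 1 - N + N + 1 = n by omega])
  rw [← (hasSum_one_div_sub_one_div ha N).tsum_eq]
  exact Summable.tsum_lt_tsum (fun k => digitTerm_le ha hdig (k + N)) hlt
    ((summable_nat_add_iff N).2 (summable_digitTerm ha hdig))
    (hasSum_one_div_sub_one_div ha N).summable

end Digits

lemma coe_intCast_eq_zero (k : ℤ) : ((k : ℝ) : Circle1) = 0 :=
  (AddCircle.coe_eq_zero_iff (p := (1 : ℝ))).2 ⟨k, by simp⟩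

lemma coe_natCast_eq_zero (k : ℕ) : ((k : ℝ) : Circle1) = 0 :=
  (AddCircle.coe_eq_zero_iff (p := (1 : ℝ))).2 ⟨k, by simp⟩

lemma eq_zero_of_coe_eq_zero {r : ℝ} (hr : |r| < 1) (h : (r : Circle1) = 0) : r = 0 := by
  obtain ⟨n, rfl⟩ := (AddCircle.coe_eq_zero_iff (p := (1 : ℝ))).1 h
  have : |n| < 1 := by exact_mod_cast (by simpa using hr : |(n : ℝ)| < 1)
  simp [Int.abs_lt_one_iff.1 this]

lemma IsCanonicalRep.nsmul_ne_zero {a c : ℕ → ℕ} {x : Circle1} (ha : IsArithSeq a)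
    (hx : IsCanonicalRep a c x) (hs : (suppOf c).Infinite) (N : ℕ) : a N • x ≠ 0 := by
  obtain ⟨hdig, hio, rfl⟩ := hx
  have hpos := tsum_digitTerm_tail_pos ha hdig hs N
  have hlt := tsum_digitTerm_tail_lt ha hdig hio N
  have haN : (0 : ℝ) < a N := by exact_mod_cast ha.pos N
  have hhead : (a N : ℝ) * ∑ i ∈ Finset.range N, digitTerm a c i =
      ((∑ i ∈ Finset.range N, c (i + 1) * (a N / a (i + 1)) : ℕ) : ℝ) := by
    push_cast
    rw [Finset.mul_sum]
    refine Finset.sum_congr rfl fun i hi => ?_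
    have hdvd := ha.dvd_of_le (Finset.mem_range.1 hi)
    rw [Nat.cast_div hdvd (by exact_mod_cast (ha.pos (i + 1)).ne'), digitTerm]
    field_simp
  change a N • ((∑' n, digitTerm a c n : ℝ) : Circle1) ≠ 0
  rw [← (summable_digitTerm ha hdig).sum_add_tsum_nat_add N, ← AddCircle.coe_nsmul,
    nsmul_eq_mul, mul_add, hhead, AddCircle.coe_add, coe_natCast_eq_zero, zero_add]
  intro h
  have hlt' : (a N : ℝ) * ∑' k, digitTerm a c (k + N) < 1 := by
    rwa [lt_div_iff₀' haN] at hlt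
  exact (mul_pos haN hpos).ne'
    (eq_zero_of_coe_eq_zero (by rwa [abs_of_pos (mul_pos haN hpos)]) h)

lemma IsArithTypeSeq.tendsto_nsmul {a e : ℕ → ℕ} (ha : StrictMono a) (he : IsArithTypeSeq a e)
    {x : Circle1} (hx : x ∈ charSub e) : Tendsto (fun n => a n • x) atTop (𝓝 0) := by
  choose σ hσ using fun k => he.2.1 (k + 1) k.succ_pos
  have hσinj : Function.Injective σ := fun i j hij => by
    have := ha.injective ((hσ i).symm.trans ((congrArg e hij).trans (hσ j)))
    omega
  refine (tendsto_add_atTop_iff_nat 1).1 ?_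
  have : Tendsto (fun k => e (σ k) • x) atTop (𝓝 0) :=
    (show Tendsto (fun n => e n • x) atTop (𝓝 0) from hx).comp hσinj.nat_tendsto_atTop
  simpa only [hσ] using this

lemma exists_strictMono_forall_frequently {P : ℕ → ℕ → Prop}
    (h : ∀ n, ∃ᶠ k in atTop, P n k) : ∃ φ : ℕ → ℕ, StrictMono φ ∧ ∀ j, P (φ j) (φ (j + 1)) := by
  simp only [frequently_atTop'] at h
  choose u hu hPu using h
  exact ⟨fun j => Nat.rec 0 (fun _ v => u v v) j, strictMono_nat_of_lt_succ fun _ => hu _ _,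
    fun _ => hPu _ _⟩

lemma exists_lt_le_succ {b : ℕ → ℕ} (hb : Tendsto b atTop atTop) {J₀ m : ℕ} (h : b J₀ < m) :
    ∃ J, J₀ ≤ J ∧ b J < m ∧ m ≤ b (J + 1) := by
  have hex : ∃ k, m ≤ b (J₀ + k + 1) := by
    obtain ⟨k, hk⟩ := ((hb.comp (tendsto_add_atTop_nat (J₀ + 1))).eventually_ge_atTop m).exists
    exact ⟨k, by rwa [show J₀ + k + 1 = k + (J₀ + 1) by omega]⟩
  refine ⟨J₀ + Nat.find hex, le_self_add, ?_, Nat.find_spec hex⟩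
  cases hk : Nat.find hex with
  | zero => simpa using h
  | succ k => simpa [← add_assoc] using Nat.find_min hex (hk ▸ k.lt_succ_self)

lemma abs_tsum_le_tsum_abs {v : ℕ → ℝ} (hv : Summable fun j => |v j|) :
    |∑' j, v j| ≤ ∑' j, |v j| := by
  simpa only [Real.norm_eq_abs] using
    norm_tsum_le_tsum_norm (f := v) (by simpa only [Real.norm_eq_abs] using hv)

section Telescoping

variable {g u : ℕ → ℝ}

lemma summable_of_abs_le_add_succ (hu : Summable u) (hg : ∀ k, |g k| ≤ u k + u (k + 1)) :
    Summable g :=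
  .of_norm_bounded (hu.add ((summable_nat_add_iff 1).2 hu)) fun k =>
    (Real.norm_eq_abs _).trans_le (hg k)

lemma abs_tsum_le_of_abs_le_add_succ (hu : Summable u) (hg : ∀ k, |g k| ≤ u k + u (k + 1)) :
    |∑' k, g k| ≤ 2 * ∑' k, u k - u 0 := by
  have hu1 := (summable_nat_add_iff 1).2 hu
  calc |∑' k, g k| ≤ ∑' k, |g k| := abs_tsum_le_tsum_abs (summable_of_abs_le_add_succ hu hg).abs
    _ ≤ ∑' k, (u k + u (k + 1)) :=
        (summable_of_abs_le_add_succ hu hg).abs.tsum_le_tsum hg (hu.add hu1)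
    _ = 2 * ∑' k, u k - u 0 := by rw [hu.tsum_add hu1, hu.tsum_eq_zero_add]; ring

end Telescoping

section Geometric

variable {u : ℕ → ℝ} {r : ℝ}

lemma summable_of_le_mul (hr0 : 0 ≤ r) (hr : r < 1) (hu : ∀ j, 0 ≤ u j)
    (h : ∀ j, u (j + 1) ≤ r * u j) : Summable u :=
  .of_nonneg_of_le hu (fun n => le_geom hr0 n fun k _ => h k)
    ((summable_geometric_of_lt_one hr0 hr).mul_right (u 0))

lemma tsum_le_of_le_mul (hr0 : 0 ≤ r) (hr : r < 1) (hu : ∀ j, 0 ≤ u j)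
    (h : ∀ j, u (j + 1) ≤ r * u j) : ∑' j, u j ≤ u 0 / (1 - r) :=
  calc ∑' j, u j ≤ ∑' j, r ^ j * u 0 :=
        Summable.tsum_le_tsum (fun n => le_geom hr0 n fun k _ => h k)
          (summable_of_le_mul hr0 hr hu h) ((summable_geometric_of_lt_one hr0 hr).mul_right _)
    _ = u 0 / (1 - r) := by rw [tsum_mul_right, tsum_geometric_of_lt_one hr0 hr, inv_mul_eq_div]

end Geometric

section Injective

variable {v : ℕ → ℝ}

lemma abs_indicator_sub_indicator_le (S S' : Set ℕ) (j : ℕ) :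
    |S.indicator v j - S'.indicator v j| ≤ |v j| := by
  rw [← Set.abs_indicator_symmDiff]
  by_cases hj : j ∈ symmDiff S S' <;> simp [hj]

/-- If every term dominates the sum of all later ones, the first index where `S` and `S'`
differ decides the sign of the difference of the two subsums. -/
lemma tsum_indicator_sub_ne_zero (hv : Summable fun j => |v j|)
    (hdom : ∀ i, ∑' k, |v (k + (i + 1))| < |v i|) {S S' : Set ℕ} (hne : S ≠ S') :
    ∑' j, (S.indicator v j - S'.indicator v j) ≠ 0 := by
  set d := fun j => S.indicator v j - S'.indicator v j
  set i := sInf (symmDiff S S')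
  have hi : i ∈ symmDiff S S' := Nat.sInf_mem (Set.symmDiff_nonempty.2 hne)
  have hbefore : ∀ j < i, d j = 0 := fun j hj => abs_eq_zero.1 <| by
    rw [← Set.abs_indicator_symmDiff, Set.indicator_of_notMem (Nat.notMem_of_lt_sInf hj),
      abs_zero]
  have hdi : |d i| = |v i| := by rw [← Set.abs_indicator_symmDiff, Set.indicator_of_mem hi]
  have hsum : Summable d := .of_norm_bounded hv fun j =>
    (Real.norm_eq_abs _).trans_le (abs_indicator_sub_indicator_le S S' j)
  have hsum' : Summable fun k => |d (k + (i + 1))| := ((summable_nat_add_iff (i + 1)).2 hsum).abs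
  rw [← hsum.sum_add_tsum_nat_add (i + 1), Finset.sum_range_succ,
    Finset.sum_eq_zero fun j hj => hbefore j (Finset.mem_range.1 hj), zero_add]
  intro h0
  have : |v i| ≤ ∑' k, |v (k + (i + 1))| :=
    calc |v i| = |∑' k, d (k + (i + 1))| := by rw [← hdi, eq_neg_of_add_eq_zero_left h0, abs_neg]
      _ ≤ ∑' k, |d (k + (i + 1))| := abs_tsum_le_tsum_abs hsum'
      _ ≤ ∑' k, |v (k + (i + 1))| :=
        hsum'.tsum_le_tsum (fun k => abs_indicator_sub_indicator_le S S' (k + (i + 1)))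
          ((summable_nat_add_iff (f := fun j => |v j|) (i + 1)).2 hv)
  linarith [hdom i]

lemma injective_coe_tsum_indicator (hv : Summable fun j => |v j|)
    (hdom : ∀ i, ∑' k, |v (k + (i + 1))| < |v i|) (hsmall : ∑' j, |v j| < 1) :
    Function.Injective fun S : Set ℕ => ((∑' j, S.indicator v j : ℝ) : Circle1) := by
  intro S S' h
  by_contra hne
  have hs := hv.of_abs
  have hsub : ∑' j, S.indicator v j - ∑' j, S'.indicator v j =
      ∑' j, (S.indicator v j - S'.indicator v j) :=
    ((hs.indicator S).tsum_sub (hs.indicator S')).symm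
  refine tsum_indicator_sub_ne_zero hv hdom hne (hsub ▸ eq_zero_of_coe_eq_zero ?_ ?_)
  · have hd : Summable fun j => |S.indicator v j - S'.indicator v j| :=
      .of_nonneg_of_le (fun _ => abs_nonneg _) (abs_indicator_sub_indicator_le S S') hv
    rw [hsub]
    exact ((abs_tsum_le_tsum_abs hd).trans
      (hd.tsum_le_tsum (abs_indicator_sub_indicator_le S S') hv)).trans_lt hsmall
  · rw [AddCircle.coe_sub]
    exact sub_eq_zero.2 h

end Injective

section Lacunary

variable {W : ℕ → ℝ}

lemma summable_abs_shift (hW : ∀ j, |W (j + 1)| ≤ 4⁻¹ * |W j|) (i : ℕ) :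
    Summable fun k => |W (k + i)| :=
  summable_of_le_mul (r := 4⁻¹) (by norm_num) (by norm_num) (fun _ => abs_nonneg _)
    fun k => by simpa only [add_right_comm] using hW (k + i)

lemma tsum_abs_shift_le (hW : ∀ j, |W (j + 1)| ≤ 4⁻¹ * |W j|) (i : ℕ) :
    ∑' k, |W (k + i)| ≤ 4 / 3 * |W i| := by
  have := tsum_le_of_le_mul (u := fun k => |W (k + i)|) (r := 4⁻¹) (by norm_num) (by norm_num)
    (fun _ => abs_nonneg _) fun k => by simpa only [add_right_comm] using hW (k + i)
  norm_num at this
  linarith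

lemma summable_abs_sub_succ (hW : ∀ j, |W (j + 1)| ≤ 4⁻¹ * |W j|) (i : ℕ) :
    Summable fun k => |W (k + i) - W (k + i + 1)| :=
  .of_nonneg_of_le (fun _ => abs_nonneg _) (fun _ => abs_sub _ _)
    ((summable_abs_shift hW i).add (summable_abs_shift hW (i + 1)))

lemma tsum_abs_sub_succ_le (hW : ∀ j, |W (j + 1)| ≤ 4⁻¹ * |W j|) (i : ℕ) :
    ∑' k, |W (k + i) - W (k + i + 1)| ≤ 5 / 3 * |W i| :=
  calc ∑' k, |W (k + i) - W (k + i + 1)| ≤ ∑' k, (|W (k + i)| + |W (k + (i + 1))|) :=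
        (summable_abs_sub_succ hW i).tsum_le_tsum (fun k => abs_sub _ _)
          ((summable_abs_shift hW i).add (summable_abs_shift hW (i + 1)))
    _ = ∑' k, |W (k + i)| + ∑' k, |W (k + (i + 1))| :=
        (summable_abs_shift hW i).tsum_add (summable_abs_shift hW (i + 1))
    _ ≤ 5 / 3 * |W i| := by
        linarith [tsum_abs_shift_le hW i, tsum_abs_shift_le hW (i + 1), hW i]

/-- The difference `W i - W (i + 1)` has size at least `3/4 |W i|`, while all later
differences together have size at most `5/12 |W i|`. -/
lemma injective_coe_tsum_indicator_sub_succ (hW : ∀ j, |W (j + 1)| ≤ 4⁻¹ * |W j|)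
    (hW0 : ∀ j, W j ≠ 0) (hhalf : |W 0| ≤ 1 / 2) :
    Function.Injective fun S : Set ℕ =>
      ((∑' j, S.indicator (fun j => W j - W (j + 1)) j : ℝ) : Circle1) := by
  refine injective_coe_tsum_indicator (by simpa using summable_abs_sub_succ hW 0)
    (fun i => ?_) ?_
  · have h1 : 3 / 4 * |W i| ≤ |W i - W (i + 1)| := by
      linarith [abs_sub_abs_le_abs_sub (W i) (W (i + 1)), hW i]
    have h2 := tsum_abs_sub_succ_le hW (i + 1)
    have h3 := abs_pos.2 (hW0 i)
    simp only [add_assoc] at h2 ⊢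
    linarith [hW i]
  · have := tsum_abs_sub_succ_le hW 0
    simp only [add_zero] at this
    linarith

end Lacunary

def roundErr (b : ℕ) (X : ℝ) : ℝ := X - round (b * X) / b

section RoundErr

variable {X : ℝ}

lemma coe_mul_roundErr_of_dvd {b m : ℕ} (h : b ∣ m) :
    ((m * roundErr b X : ℝ) : Circle1) = m • (X : Circle1) := by
  obtain ⟨t, rfl⟩ := h
  rcases Nat.eq_zero_or_pos b with rfl | hb
  · simp
  have : ((b * t : ℕ) : ℝ) * roundErr b X = (b * t : ℕ) * X - ((t * round (b * X) : ℤ) : ℝ) := by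
    rw [roundErr]
    push_cast
    field_simp
  rw [this, AddCircle.coe_sub, coe_intCast_eq_zero, sub_zero, ← nsmul_eq_mul, AddCircle.coe_nsmul]

lemma mul_abs_roundErr {b : ℕ} (hb : 0 < b) :
    b * |roundErr b X| = ‖b • (X : Circle1)‖ := by
  have hb' : (0 : ℝ) < b := by exact_mod_cast hb
  rw [← AddCircle.coe_nsmul, nsmul_eq_mul, UnitAddCircle.norm_eq, ← abs_of_pos hb', ← abs_mul,
    roundErr, mul_sub, mul_div_cancel₀ _ hb'.ne', abs_of_pos hb']

lemma mul_abs_roundErr_le {b m : ℕ} (hb : 0 < b) (hm : m ≤ b) :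
    m * |roundErr b X| ≤ ‖b • (X : Circle1)‖ :=
  (mul_le_mul_of_nonneg_right (by exact_mod_cast hm) (abs_nonneg _)).trans_eq (mul_abs_roundErr hb)

lemma abs_roundErr_le {b : ℕ} (hb : 0 < b) : |roundErr b X| ≤ ‖b • (X : Circle1)‖ := by
  simpa using mul_abs_roundErr_le (X := X) (m := 1) hb hb

lemma coe_mul_roundErr_sub_eq_zero {b b' m : ℕ} (h : b ∣ m) (h' : b' ∣ m) :
    ((m * (roundErr b X - roundErr b' X) : ℝ) : Circle1) = 0 := by
  rw [mul_sub, AddCircle.coe_sub, coe_mul_roundErr_of_dvd h, coe_mul_roundErr_of_dvd h', sub_self]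

lemma norm_coe_mul_roundErr_sub_le {b b' m : ℕ} (h : b ∣ m) (hb' : 0 < b') (hm : m ≤ b') :
    ‖((m * (roundErr b X - roundErr b' X) : ℝ) : Circle1)‖ ≤
      ‖m • (X : Circle1)‖ + ‖b' • (X : Circle1)‖ := by
  rw [mul_sub, AddCircle.coe_sub, coe_mul_roundErr_of_dvd h]
  refine (norm_sub_le _ _).trans (add_le_add le_rfl ?_)
  refine QuotientAddGroup.norm_mk_le_norm.trans ?_
  rw [Real.norm_eq_abs, abs_mul, Nat.abs_cast]
  exact mul_abs_roundErr_le hb' hm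

lemma abs_mul_roundErr_sub_le {b b' m : ℕ} (hb : 0 < b) (hb' : 0 < b') (hm : m ≤ b)
    (hbb' : b ≤ b') :
    |m * (roundErr b X - roundErr b' X)| ≤ ‖b • (X : Circle1)‖ + ‖b' • (X : Circle1)‖ := by
  rw [abs_mul, Nat.abs_cast]
  calc (m : ℝ) * |roundErr b X - roundErr b' X| ≤ m * |roundErr b X| + m * |roundErr b' X| := by
        rw [← mul_add]
        exact mul_le_mul_of_nonneg_left (abs_sub _ _) m.cast_nonneg
    _ ≤ _ := add_le_add (mul_abs_roundErr_le hb hm) (mul_abs_roundErr_le hb' (hm.trans hbb'))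

end RoundErr

lemma norm_coe_mul_indicator_le (r : ℝ) (S : Set ℕ) (v : ℕ → ℝ) (j : ℕ) :
    ‖((r * S.indicator v j : ℝ) : Circle1)‖ ≤ ‖((r * v j : ℝ) : Circle1)‖ := by
  by_cases hj : j ∈ S <;> simp [hj]

lemma abs_mul_indicator_le (r : ℝ) (S : Set ℕ) (v : ℕ → ℝ) (j : ℕ) :
    |r * S.indicator v j| ≤ |r * v j| := by
  by_cases hj : j ∈ S
  · simp [hj]
  · simp only [hj, not_false_eq_true, Set.indicator_of_notMem, mul_zero, abs_zero]
    exact abs_nonneg _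

def blockSum (b : ℕ → ℕ) (X : ℝ) (S : Set ℕ) : ℝ :=
  ∑' j, S.indicator (fun j => roundErr (b j) X - roundErr (b (j + 1)) X) j

section BlockSum

variable {b : ℕ → ℕ} {X : ℝ}

lemma norm_nsmul_blockSum_le (hpos : ∀ j, 0 < b j) (hdvd : ∀ i j, i ≤ j → b i ∣ b j)
    (hε : Summable fun j => ‖b j • (X : Circle1)‖) (S : Set ℕ) {m J : ℕ} (hJ : b J ∣ m)
    (hm : m ≤ b (J + 1)) :
    ‖m • (blockSum b X S : Circle1)‖ ≤
      ‖m • (X : Circle1)‖ + 2 * ∑' k, ‖b (k + (J + 1)) • (X : Circle1)‖ := by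
  set ε := fun j => ‖b j • (X : Circle1)‖
  have hmono : Monotone b :=
    monotone_nat_of_le_succ fun j => Nat.le_of_dvd (hpos _) (hdvd _ _ j.le_succ)
  set g := fun j => (m : ℝ) * S.indicator (fun j => roundErr (b j) X - roundErr (b (j + 1)) X) j
  have hlate : ∀ k, |g (k + (J + 1))| ≤ ε (k + (J + 1)) + ε (k + 1 + (J + 1)) := fun k => by
    rw [show k + 1 + (J + 1) = k + (J + 1) + 1 by omega]
    exact (abs_mul_indicator_le _ _ _ _).trans (abs_mul_roundErr_sub_le (hpos _) (hpos _)
      (hm.trans (hmono (by omega))) (hmono (by omega)))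
  have hεtail := (summable_nat_add_iff (J + 1)).2 hε
  have hsplit : m • (blockSum b X S : Circle1) = ((∑ j ∈ Finset.range J, g j : ℝ) : Circle1) +
      (g J : Circle1) + ((∑' k, g (k + (J + 1)) : ℝ) : Circle1) := by
    rw [blockSum, ← AddCircle.coe_nsmul, nsmul_eq_mul, ← tsum_mul_left,
      ← (summable_of_abs_le_add_succ hεtail hlate).sum_add_tsum_nat_add',
      Finset.sum_range_succ, AddCircle.coe_add, AddCircle.coe_add]
  have hbefore : ((∑ j ∈ Finset.range J, g j : ℝ) : Circle1) = 0 := by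
    rw [QuotientAddGroup.mk_sum]
    refine Finset.sum_eq_zero fun j hj => norm_le_zero_iff.1 ?_
    have hjJ := Finset.mem_range.1 hj
    refine (norm_coe_mul_indicator_le _ _ _ _).trans_eq ?_
    rw [coe_mul_roundErr_sub_eq_zero ((hdvd _ _ hjJ.le).trans hJ) ((hdvd _ _ hjJ).trans hJ),
      norm_zero]
  have hstraddle : ‖(g J : Circle1)‖ ≤ ‖m • (X : Circle1)‖ + ε (J + 1) :=
    (norm_coe_mul_indicator_le _ _ _ _).trans (norm_coe_mul_roundErr_sub_le hJ (hpos _) hm)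
  have hrest : ‖((∑' k, g (k + (J + 1)) : ℝ) : Circle1)‖ ≤
      2 * ∑' k, ε (k + (J + 1)) - ε (J + 1) := by
    simpa using QuotientAddGroup.norm_mk_le_norm.trans
      ((Real.norm_eq_abs _).trans_le (abs_tsum_le_of_abs_le_add_succ hεtail hlate))
  rw [hsplit, hbefore, zero_add]
  refine (norm_add_le _ _).trans ?_
  linarith

lemma tendsto_nsmul_blockSum (hpos : ∀ j, 0 < b j) (hdvd : ∀ i j, i ≤ j → b i ∣ b j)
    (hb : StrictMono b) (hε : Summable fun j => ‖b j • (X : Circle1)‖) {e : ℕ → ℕ}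
    (he : Tendsto e atTop atTop) (hediv : ∀ n j, b j < e n → b j ∣ e n)
    (hX : Tendsto (fun n => e n • (X : Circle1)) atTop (𝓝 0)) (S : Set ℕ) :
    Tendsto (fun n => e n • (blockSum b X S : Circle1)) atTop (𝓝 0) := by
  refine NormedAddGroup.tendsto_nhds_zero.2 fun δ hδ => ?_
  obtain ⟨J₀, hJ₀⟩ := eventually_atTop.1 <|
    (tendsto_sum_nat_add fun j => ‖b j • (X : Circle1)‖).eventually
      (gt_mem_nhds (by positivity : (0 : ℝ) < δ / 4))
  filter_upwards [(NormedAddGroup.tendsto_nhds_zero.1 hX) _ (half_pos hδ),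
    he.eventually_gt_atTop (b J₀)] with n hn hbn
  obtain ⟨J, hJ₀J, hbJ, hJ⟩ := exists_lt_le_succ hb.tendsto_atTop hbn
  have := norm_nsmul_blockSum_le hpos hdvd hε S (hediv n J hbJ) hJ
  linarith [hJ₀ (J + 1) (by omega)]

end BlockSum

lemma IsArithSeq.exists_injective_forall_mem_charSub {a : ℕ → ℕ} (ha : IsArithSeq a) {X : ℝ}
    (hne : ∀ n, a n • (X : Circle1) ≠ 0)
    (hlim : Tendsto (fun n => a n • (X : Circle1)) atTop (𝓝 0)) :
    ∃ Φ : Set ℕ → Circle1, Function.Injective Φ ∧ ∀ e : ℕ → ℕ, StrictMono e →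
      (∀ n i, a i < e n → a i ∣ e n) → (X : Circle1) ∈ charSub e → ∀ S, Φ S ∈ charSub e := by
  have hW0 : ∀ n, 0 < |roundErr (a n) X| := fun n => pos_of_mul_pos_right
    ((mul_abs_roundErr (ha.pos n)).trans_gt (norm_pos_iff.2 (hne n))) (Nat.cast_nonneg _)
  obtain ⟨φ, hφ, hsel⟩ := exists_strictMono_forall_frequently
    (P := fun n k => ‖a k • (X : Circle1)‖ ≤ 4⁻¹ * |roundErr (a n) X|) fun n =>
      ((tendsto_zero_iff_norm_tendsto_zero.1 hlim).eventually
        (eventually_le_nhds (mul_pos (by norm_num) (hW0 n)))).frequently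
  have hW : ∀ j, |roundErr (a (φ (j + 1))) X| ≤ 4⁻¹ * |roundErr (a (φ j)) X| := fun j =>
    (abs_roundErr_le (ha.pos _)).trans (hsel j)
  have hWsum : Summable fun j => |roundErr (a (φ j)) X| := by
    simpa using summable_abs_shift hW 0
  have hε : Summable fun j => ‖a (φ j) • (X : Circle1)‖ :=
    (summable_nat_add_iff 1).1 <| .of_nonneg_of_le (fun _ => norm_nonneg _) hsel
      (hWsum.mul_left _)
  refine ⟨fun S => blockSum (fun j => a (φ j)) X S,
    injective_coe_tsum_indicator_sub_succ hW (fun j => (hW0 _).ne' ∘ abs_eq_zero.2) ?_,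
    fun e he hediv hX S => tendsto_nsmul_blockSum (fun _ => ha.pos _)
      (fun i j hij => ha.dvd_of_le (hφ.monotone hij)) (ha.2.1.comp hφ) hε he.tendsto_atTop
      (fun n j => hediv n (φ j)) hX S⟩
  calc |roundErr (a (φ 0)) X| ≤ ‖a (φ 0) • (X : Circle1)‖ := abs_roundErr_le (ha.pos _)
    _ ≤ 1 / 2 := by simpa using AddCircle.norm_le_half_period (p := (1 : ℝ)) one_ne_zero

/-- if `t_{(e_n)}(𝕋)` contains an element with infinite support then
`|t_{(e_n)}(𝕋)| = 𝔠`. -/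
theorem card_charSub_continuum_of_infinite_supp (a e : ℕ → ℕ) (ha : IsArithSeq a)
    (he : IsArithTypeSeq a e)
    (hx : ∃ x ∈ charSub e, ∃ c : ℕ → ℕ, IsCanonicalRep a c x ∧ (suppOf c).Infinite) :
    Cardinal.mk ↥(charSub e) = Cardinal.continuum := by
  obtain ⟨x, hxe, c, hc, hs⟩ := hx
  obtain ⟨X, rfl⟩ := QuotientAddGroup.mk_surjective x
  obtain ⟨Φ, hΦ, hmem⟩ := ha.exists_injective_forall_mem_charSub (hc.nsmul_ne_zero ha hs)
    (he.tendsto_nsmul ha.2.1 hxe)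
  have hediv : ∀ n i, a i < e n → a i ∣ e n := fun n i h => ha.dvd_of_mem_DSet (he.2.2 ⟨n, rfl⟩) h
  refine le_antisymm ?_ ?_
  · calc Cardinal.mk (charSub e) ≤ Cardinal.mk Circle1 := Cardinal.mk_set_le _
      _ ≤ Cardinal.mk ℝ := Cardinal.mk_le_of_surjective QuotientAddGroup.mk_surjective
      _ = Cardinal.continuum := Cardinal.mk_real
  · calc Cardinal.continuum = Cardinal.mk (Set ℕ) := Cardinal.mk_set_nat.symm
      _ ≤ Cardinal.mk (charSub e) :=
        Cardinal.mk_le_of_injective (f := fun S => ⟨Φ S, hmem e he.1 hediv hxe S⟩)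
          fun _ _ h => hΦ (congrArg Subtype.val h)
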